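/- arXiv:2404.06556 — 2 statements merged into one kernel-verified Lean document; each statement's English description precedes it below -/
import Mathlib

section
/- If (Q(t), P(t)) is a solution of the symmetric rigid body equations Q̇ = QU, Ṗ = PU with U = J⁻¹(QᵀP − PᵀQ), and M := QᵀP − PᵀQ, Ω := U, then M satisfies the Euler rigid body equation Ṁ = [M, Ω] = MΩ − ΩM. -/
open Matrix

attribute [local instance] Matrix.normedAddCommGroup Matrix.normedSpace

namespace Matrix

variable {𝕜 : Type*} [NontriviallyNormedField 𝕜] [CompleteSpace 𝕜]
  {l m p : Type*} [Fintype l] [Fintype m] [Fintype p]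

noncomputable def mulCLM : Matrix l m 𝕜 →L[𝕜] Matrix m p 𝕜 →L[𝕜] Matrix l p 𝕜 :=
  LinearMap.toContinuousLinearMap
    (LinearMap.toContinuousLinearMap.toLinearMap ∘ₗ mulLinearMap 𝕜)

noncomputable def transposeCLM : Matrix l m 𝕜 →L[𝕜] Matrix m l 𝕜 :=
  LinearMap.toContinuousLinearMap (transposeLinearEquiv l m 𝕜 𝕜).toLinearMap

end Matrix

section MatrixDerivatives

variable {𝕜 : Type*} [NontriviallyNormedField 𝕜] [CompleteSpace 𝕜]
  {l m p : Type*} [Fintype l] [Fintype m] [Fintype p] {t : 𝕜}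

theorem HasDerivAt.matrix_mul {f : 𝕜 → Matrix l m 𝕜} {g : 𝕜 → Matrix m p 𝕜}
    {f' : Matrix l m 𝕜} {g' : Matrix m p 𝕜} (hf : HasDerivAt f f' t) (hg : HasDerivAt g g' t) :
    HasDerivAt (fun s => f s * g s) (f' * g t + f t * g') t := by
  rw [add_comm]
  exact mulCLM.hasDerivAt_of_bilinear (fun _ => hf) (fun _ => hg)

theorem HasDerivAt.matrix_transpose {f : 𝕜 → Matrix l m 𝕜} {f' : Matrix l m 𝕜}
    (hf : HasDerivAt f f' t) : HasDerivAt (fun s => (f s)ᵀ) f'ᵀ t :=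
  (transposeCLM : Matrix l m 𝕜 →L[𝕜] Matrix m l 𝕜).hasFDerivAt.comp_hasDerivAt t hf

end MatrixDerivatives

theorem symmetric_rigid_body_to_euler_general {n : ℕ}
    (Q P U : ℝ → Matrix (Fin n) (Fin n) ℝ)
    (hUskew : ∀ t, (U t)ᵀ = -(U t))
    (hQ : ∀ t, HasDerivAt Q (Q t * U t) t)
    (hP : ∀ t, HasDerivAt P (P t * U t) t) :
    ∀ t, HasDerivAt (fun s => (Q s)ᵀ * P s - (P s)ᵀ * Q s)
      (((Q t)ᵀ * P t - (P t)ᵀ * Q t) * U t - U t * ((Q t)ᵀ * P t - (P t)ᵀ * Q t)) t := by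
  intro t
  have hM : HasDerivAt (fun s => (Q s)ᵀ * P s - (P s)ᵀ * Q s) _ t :=
    ((hQ t).matrix_transpose.matrix_mul (hP t)).sub
      ((hP t).matrix_transpose.matrix_mul (hQ t))
  convert hM using 1
  simp only [transpose_mul, hUskew]
  noncomm_ring

/-- If `(Q, P)` solves the symmetric rigid body equations `Q̇ = QU`, `Ṗ = PU`, where
`U = J⁻¹(QᵀP − PᵀQ)` (expressed by `J(U) = ΛU + UΛ = QᵀP − PᵀQ`, `U` skew), then
`M := QᵀP − PᵀQ` satisfies the Euler rigid body equation `Ṁ = MΩ − ΩM` with `Ω = U`. -/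
theorem symmetric_rigid_body_to_euler {n : ℕ}
    (Λ : Matrix (Fin n) (Fin n) ℝ)
    (Q P U : ℝ → Matrix (Fin n) (Fin n) ℝ)
    (hUskew : ∀ t, (U t)ᵀ = -(U t))
    (hJ : ∀ t, Λ * U t + U t * Λ = (Q t)ᵀ * P t - (P t)ᵀ * Q t)
    (hQ : ∀ t, HasDerivAt Q (Q t * U t) t)
    (hP : ∀ t, HasDerivAt P (P t * U t) t) :
    ∀ t, HasDerivAt (fun s => (Q s)ᵀ * P s - (P s)ᵀ * Q s)
      (((Q t)ᵀ * P t - (P t)ᵀ * Q t) * U t - U t * ((Q t)ᵀ * P t - (P t)ᵀ * Q t)) t :=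
  symmetric_rigid_body_to_euler_general Q P U hUskew hQ hP
end

section
/- For curves x(t), p(t) in a Lie algebra with inner product given by the negative Killing form, the Hamiltonian H*(x,p) = −(1/2)⟨x, [p,[p,x]]⟩ + V(x) generates the flow ẋ = [x,[p,x]], ṗ = [p,[p,x]] − ∇V(x). -/
open Matrix

attribute [local instance] Matrix.normedAddCommGroup Matrix.normedSpace

/-- The inner product `⟨ξ,η⟩ = −(1/2) trace (ξη)` on `so(n)` (a negative multiple of the
Killing form). -/
noncomputable def ip {n : ℕ} (ξ η : Matrix (Fin n) (Fin n) ℝ) : ℝ :=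
  -(1 / 2 : ℝ) * Matrix.trace (ξ * η)

/-- The bracket `[a,b] = ab − ba`. -/
def brk {n : ℕ} (a b : Matrix (Fin n) (Fin n) ℝ) : Matrix (Fin n) (Fin n) ℝ :=
  a * b - b * a

/-! Both partial derivatives are derivatives at `0` of quadratic polynomials in `ε`. Their linear
coefficients are brought into gradient form `⟨g, h⟩` by ad-invariance of the trace form,
`⟨a, [b,c]⟩ = ⟨[a,b], c⟩`, which makes `ad p` skew-adjoint and `(ad p)²` self-adjoint. -/

lemma hasDerivAt_zero_of_eq_quadratic {f : ℝ → ℝ} {a b c : ℝ}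
    (hf : ∀ ε, f ε = a + b * ε + c * ε ^ 2) : HasDerivAt f b 0 := by
  have hpoly := (((hasDerivAt_id (0 : ℝ)).const_mul b).add
    ((hasDerivAt_pow 2 (0 : ℝ)).const_mul c)).const_add a
  rw [funext hf]
  simpa [add_assoc] using hpoly

attribute [local instance] LieRing.ofAssociativeRing

section TraceForm

variable {n : ℕ}

lemma brk_eq_lie (a b : Matrix (Fin n) (Fin n) ℝ) : brk a b = ⁅a, b⁆ :=
  (Ring.lie_def a b).symm

lemma ip_comm (a b : Matrix (Fin n) (Fin n) ℝ) : ip a b = ip b a := by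
  rw [ip, ip, trace_mul_comm]

lemma ip_add_left (a b c : Matrix (Fin n) (Fin n) ℝ) : ip (a + b) c = ip a c + ip b c := by
  simp only [ip, add_mul, trace_add]; ring

lemma ip_add_right (a b c : Matrix (Fin n) (Fin n) ℝ) : ip a (b + c) = ip a b + ip a c := by
  simp only [ip, mul_add, trace_add]

lemma ip_smul_left (r : ℝ) (a b : Matrix (Fin n) (Fin n) ℝ) : ip (r • a) b = r * ip a b := by
  simp only [ip, smul_mul_assoc, trace_smul, smul_eq_mul]; ring

lemma ip_smul_right (r : ℝ) (a b : Matrix (Fin n) (Fin n) ℝ) : ip a (r • b) = r * ip a b := by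
  simp only [ip, mul_smul_comm, trace_smul, smul_eq_mul]; ring

lemma ip_neg_left (a b : Matrix (Fin n) (Fin n) ℝ) : ip (-a) b = -ip a b := by
  simp only [ip, neg_mul, trace_neg, mul_neg]

lemma ip_neg_right (a b : Matrix (Fin n) (Fin n) ℝ) : ip a (-b) = -ip a b := by
  simp only [ip, mul_neg, trace_neg]

lemma ip_lie_assoc (a b c : Matrix (Fin n) (Fin n) ℝ) : ip a ⁅b, c⁆ = ip ⁅a, b⁆ c := by
  simp only [ip, Ring.lie_def, mul_sub, sub_mul, trace_sub, ← mul_assoc]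
  rw [trace_mul_cycle a c b]

lemma ip_lie_skew (p a b : Matrix (Fin n) (Fin n) ℝ) : ip a ⁅p, b⁆ = -ip ⁅p, a⁆ b := by
  rw [ip_lie_assoc, ← lie_skew p a, ip_neg_left, neg_neg]

lemma ip_lie_lie_symm (p a b : Matrix (Fin n) (Fin n) ℝ) :
    ip a ⁅p, ⁅p, b⁆⁆ = ip ⁅p, ⁅p, a⁆⁆ b := by
  rw [ip_lie_skew, ip_lie_skew, neg_neg]

lemma ip_lie_lie_add_smul (x p h : Matrix (Fin n) (Fin n) ℝ) (ε : ℝ) :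
    ip x ⁅p + ε • h, ⁅p + ε • h, x⁆⁆ =
      ip x ⁅p, ⁅p, x⁆⁆ + (-2 * ip ⁅x, ⁅p, x⁆⁆ h) * ε + ip x ⁅h, ⁅h, x⁆⁆ * ε ^ 2 := by
  have hcross₁ : ip x ⁅p, ⁅h, x⁆⁆ = -ip ⁅x, ⁅p, x⁆⁆ h := by
    rw [ip_lie_skew, ← lie_skew h x, ip_neg_right, neg_neg, ip_lie_assoc, ← lie_skew ⁅p, x⁆ x,
      ip_neg_left]
  have hcross₂ : ip x ⁅h, ⁅p, x⁆⁆ = -ip ⁅x, ⁅p, x⁆⁆ h := by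
    rw [ip_lie_assoc, ip_comm, ip_lie_assoc, ← lie_skew ⁅p, x⁆ x, ip_neg_left]
  simp only [add_lie, lie_add, smul_lie, lie_smul, ip_add_right, ip_smul_right, hcross₁, hcross₂]
  ring

lemma ip_add_smul_lie_lie (x p h : Matrix (Fin n) (Fin n) ℝ) (ε : ℝ) :
    ip (x + ε • h) ⁅p, ⁅p, x + ε • h⁆⁆ =
      ip x ⁅p, ⁅p, x⁆⁆ + (2 * ip ⁅p, ⁅p, x⁆⁆ h) * ε + ip h ⁅p, ⁅p, h⁆⁆ * ε ^ 2 := by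
  simp only [lie_add, lie_smul, ip_add_left, ip_add_right, ip_smul_left, ip_smul_right,
    ip_lie_lie_symm p x h, ip_comm h ⁅p, ⁅p, x⁆⁆]
  ring

end TraceForm

theorem hamiltonian_generates_double_bracket_flow_general {n : ℕ}
    (V : Matrix (Fin n) (Fin n) ℝ → ℝ)
    (gradV : Matrix (Fin n) (Fin n) ℝ → Matrix (Fin n) (Fin n) ℝ)
    (hgrad : ∀ x h : Matrix (Fin n) (Fin n) ℝ, xᵀ = -x → hᵀ = -h →
      HasDerivAt (fun ε : ℝ => V (x + ε • h)) (ip (gradV x) h) 0)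
    (x p : Matrix (Fin n) (Fin n) ℝ) (hx : xᵀ = -x) :
    (∀ h : Matrix (Fin n) (Fin n) ℝ, hᵀ = -h →
      HasDerivAt (fun ε : ℝ => -(1 / 2 : ℝ) * ip x (brk (p + ε • h) (brk (p + ε • h) x)) + V x)
        (ip (brk x (brk p x)) h) 0) ∧
    (∀ h : Matrix (Fin n) (Fin n) ℝ, hᵀ = -h →
      HasDerivAt
        (fun ε : ℝ =>
          -(1 / 2 : ℝ) * ip (x + ε • h) (brk p (brk p (x + ε • h))) + V (x + ε • h))
        (ip (gradV x) h - ip (brk p (brk p x)) h) 0) := by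
  simp only [brk_eq_lie]
  refine ⟨fun h _ => ?_, fun h hh => ?_⟩
  · have hkin := hasDerivAt_zero_of_eq_quadratic (ip_lie_lie_add_smul x p h)
    exact ((hkin.const_mul _).add_const (V x)).congr_deriv (by ring)
  · have hkin := hasDerivAt_zero_of_eq_quadratic (ip_add_smul_lie_lie x p h)
    exact ((hkin.const_mul _).add (hgrad x h hx hh)).congr_deriv (by ring)

/-- The Hamiltonian `H*(x,p) = −(1/2)⟨x,[p,[p,x]]⟩ + V(x)` generates the flow
`ẋ = [x,[p,x]]`, `ṗ = [p,[p,x]] − ∇V(x)`: its partial gradient in `p` is `[x,[p,x]]` and its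
partial gradient in `x` is `∇V(x) − [p,[p,x]]` (so that `ṗ = −∂H*/∂x = [p,[p,x]] − ∇V(x)`). -/
theorem hamiltonian_generates_double_bracket_flow {n : ℕ}
    (V : Matrix (Fin n) (Fin n) ℝ → ℝ)
    (gradV : Matrix (Fin n) (Fin n) ℝ → Matrix (Fin n) (Fin n) ℝ)
    (hgrad : ∀ x h : Matrix (Fin n) (Fin n) ℝ, xᵀ = -x → hᵀ = -h →
      HasDerivAt (fun ε : ℝ => V (x + ε • h)) (ip (gradV x) h) 0)
    (x p : Matrix (Fin n) (Fin n) ℝ) (hx : xᵀ = -x) (hp : pᵀ = -p) :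
    (∀ h : Matrix (Fin n) (Fin n) ℝ, hᵀ = -h →
      HasDerivAt (fun ε : ℝ => -(1 / 2 : ℝ) * ip x (brk (p + ε • h) (brk (p + ε • h) x)) + V x)
        (ip (brk x (brk p x)) h) 0) ∧
    (∀ h : Matrix (Fin n) (Fin n) ℝ, hᵀ = -h →
      HasDerivAt
        (fun ε : ℝ =>
          -(1 / 2 : ℝ) * ip (x + ε • h) (brk p (brk p (x + ε • h))) + V (x + ε • h))
        (ip (gradV x) h - ip (brk p (brk p x)) h) 0) :=
  hamiltonian_generates_double_bracket_flow_general V gradV hgrad x p hx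
end
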